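/- Let $q = p^r$ with $r \geq 1$, and let $\sigma$ be an element of the group $T = \{t + \sum_{i\geq1} a_i t^{1+qi} : a_i \in \mathbb{F}_p\}$ under composition, with $\sigma \in T_i \setminus T_{i+1}$ (i.e., $\mathrm{ord}_t(\sigma(t)-t) = 1+qi$). Then $\sigma^{\circ p} \in T_{pi} \setminus T_{pi+1}$. Consequently, every nontrivial element of $T$ has infinite order. -/

import Mathlib

open PowerSeries

/-- Composition of power series `f ∘ g` (intended for `g` with zero constant term). -/
noncomputable def pcomp {k : Type} [CommRing k] (f g : PowerSeries k) : PowerSeries k :=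
  PowerSeries.mk fun n =>
    PowerSeries.coeff (R := k) n (Polynomial.eval₂ (PowerSeries.C (R := k)) g (PowerSeries.trunc (n + 1) f))

/-- `n`-fold compositional iterate of `f`. -/
noncomputable def pcompIter {k : Type} [CommRing k] (f : PowerSeries k) : ℕ → PowerSeries k
  | 0 => PowerSeries.X
  | n + 1 => pcomp f (pcompIter f n)

/-- Membership in the Nottingham group: `f = t + a₂ t² + ⋯`. -/
def IsNott {k : Type} [CommRing k] (f : PowerSeries k) : Prop :=
  PowerSeries.coeff (R := k) 0 f = 0 ∧ PowerSeries.coeff (R := k) 1 f = 1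

/-- Membership in `T = S_q`: series of the form `t + ∑_{i≥1} a_i t^{1+qi}`. -/
def InT {k : Type} [CommRing k] (q : ℕ) (f : PowerSeries k) : Prop :=
  PowerSeries.coeff (R := k) 0 f = 0 ∧ PowerSeries.coeff (R := k) 1 f = 1 ∧
    ∀ m, 2 ≤ m → ¬ q ∣ (m - 1) → PowerSeries.coeff (R := k) m f = 0

/-- Membership in `T_i = {f ∈ T : f(t) ≡ t mod t^{1+qi}}`. -/
def InTi {k : Type} [CommRing k] (q : ℕ) (f : PowerSeries k) (i : ℕ) : Prop :=
  InT q f ∧ ∀ m, 2 ≤ m → m < 1 + q * i → PowerSeries.coeff (R := k) m f = 0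


variable {k : Type} [CommRing k]

lemma coeff_pow_eq_zero {g : PowerSeries k} (hg : constantCoeff (R := k) g = 0) :
    ∀ d m : ℕ, m < d → coeff (R := k) m (g ^ d) = 0 := by
  intro d
  induction d with
  | zero => omega
  | succ d ih =>
    intro m hm
    rw [pow_succ, coeff_mul]
    apply Finset.sum_eq_zero
    rintro ⟨c, e⟩ hce
    rw [Finset.HasAntidiagonal.mem_antidiagonal] at hce
    rcases Nat.eq_zero_or_pos e with he | he
    · subst he
      simp only [coeff_zero_eq_constantCoeff, hg, mul_zero]
    · have : c < d := by omega
      rw [ih c this, zero_mul]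

lemma coeff_eval₂_trunc (f g : PowerSeries k) (N n : ℕ) :
    coeff (R := k) n (Polynomial.eval₂ (C (R := k)) g (trunc N f)) =
      ∑ d ∈ Finset.range N, coeff (R := k) d f * coeff (R := k) n (g ^ d) := by
  rw [eval₂_trunc_eq_sum_range, map_sum]
  apply Finset.sum_congr rfl
  intro d _
  rw [coeff_C_mul]

/-- master formula -/
lemma coeff_pcomp (f g : PowerSeries k) (n : ℕ) :
    coeff (R := k) n (pcomp f g) =
      ∑ d ∈ Finset.range (n + 1), coeff (R := k) d f * coeff (R := k) n (g ^ d) := by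
  rw [pcomp, coeff_mk, coeff_eval₂_trunc]

lemma coeff_pcomp_of_const_zero {g : PowerSeries k} (f : PowerSeries k)
    (hg : constantCoeff (R := k) g = 0) {N n : ℕ} (hn : n < N) :
    coeff (R := k) n (pcomp f g) = ∑ d ∈ Finset.range N, coeff (R := k) d f * coeff (R := k) n (g ^ d) := by
  rw [coeff_pcomp]
  apply Finset.sum_subset
  · intro x hx; rw [Finset.mem_range] at *; omega
  · intro x _ hx
    rw [Finset.mem_range] at hx
    rw [coeff_pow_eq_zero hg x n (by omega), mul_zero]

/-- agreement of coefficients below `s` -/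
def Ceq (s : ℕ) (A B : PowerSeries k) : Prop := ∀ m, m < s → coeff (R := k) m A = coeff (R := k) m B

lemma Ceq.mul {s : ℕ} {A A' B B' : PowerSeries k} (hA : Ceq s A A') (hB : Ceq s B B') :
    Ceq s (A * B) (A' * B') := by
  intro m hm
  rw [coeff_mul, coeff_mul]
  apply Finset.sum_congr rfl
  rintro ⟨c, e⟩ hce
  rw [Finset.HasAntidiagonal.mem_antidiagonal] at hce
  rw [hA c (by omega), hB e (by omega)]

lemma Ceq.pow {s : ℕ} {A A' : PowerSeries k} (hA : Ceq s A A') (d : ℕ) :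
    Ceq s (A ^ d) (A' ^ d) := by
  induction d with
  | zero => intro m hm; rfl
  | succ d ih => rw [pow_succ, pow_succ]; exact ih.mul hA

lemma pcomp_ceq_eval {g : PowerSeries k} (f : PowerSeries k) (hg : constantCoeff (R := k) g = 0) (N : ℕ) :
    Ceq N (pcomp f g) (Polynomial.eval₂ (C (R := k)) g (trunc N f)) := by
  intro n hn
  rw [coeff_pcomp_of_const_zero f hg hn, coeff_eval₂_trunc]

lemma pcomp_one {g : PowerSeries k} : pcomp 1 g = 1 := by
  ext n
  rw [coeff_pcomp, Finset.sum_eq_single 0]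
  · simp
  · intro d _ hd
    rw [coeff_one, if_neg hd, zero_mul]
  · intro h; exact absurd (Finset.mem_range.mpr (Nat.succ_pos n)) h

lemma pcomp_mul {f₁ f₂ g : PowerSeries k} (hg : constantCoeff (R := k) g = 0) :
    pcomp (f₁ * f₂) g = pcomp f₁ g * pcomp f₂ g := by
  ext n
  have h1 := pcomp_ceq_eval (f₁ * f₂) hg (n+1) n (Nat.lt_succ_self n)
  have h2 : coeff (R := k) n (Polynomial.eval₂ (C (R := k)) g (trunc (n+1) (f₁ * f₂))) =
      coeff (R := k) n (Polynomial.eval₂ (C (R := k)) g (trunc (n+1) f₁ * trunc (n+1) f₂)) := by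
    have hdvd : (Polynomial.X : Polynomial k) ^ (n+1) ∣
        trunc (n+1) f₁ * trunc (n+1) f₂ - trunc (n+1) (f₁ * f₂) := by
      rw [Polynomial.X_pow_dvd_iff]
      intro d hd
      have hc : (trunc (n+1) f₁ * trunc (n+1) f₂).coeff d = coeff (R := k) d (f₁ * f₂) := by
        rw [Polynomial.coeff_mul, coeff_mul]
        apply Finset.sum_congr rfl
        rintro ⟨c, e⟩ hce
        rw [Finset.HasAntidiagonal.mem_antidiagonal] at hce
        rw [coeff_trunc, if_pos (by omega), coeff_trunc, if_pos (by omega)]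
      rw [Polynomial.coeff_sub, hc, coeff_trunc, if_pos hd, sub_self]
    obtain ⟨R, hR⟩ := hdvd
    have e1 : Polynomial.eval₂ (C (R := k)) g (trunc (n+1) f₁ * trunc (n+1) f₂) -
        Polynomial.eval₂ (C (R := k)) g (trunc (n+1) (f₁ * f₂)) =
        g ^ (n+1) * Polynomial.eval₂ (C (R := k)) g R := by
      rw [← Polynomial.eval₂_sub, hR, Polynomial.eval₂_mul, Polynomial.eval₂_X_pow]
    have e2 := sub_eq_iff_eq_add.mp e1
    rw [e2, map_add]
    have hz : coeff (R := k) n (g ^ (n+1) * Polynomial.eval₂ (C (R := k)) g R) = 0 := by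
      rw [coeff_mul]
      apply Finset.sum_eq_zero
      rintro ⟨c, e⟩ hce
      rw [Finset.HasAntidiagonal.mem_antidiagonal] at hce
      rw [coeff_pow_eq_zero hg (n+1) c (by omega), zero_mul]
    rw [hz, zero_add]
  rw [h1, h2, Polynomial.eval₂_mul]
  exact (((pcomp_ceq_eval f₁ hg (n+1)).mul (pcomp_ceq_eval f₂ hg (n+1))) n (Nat.lt_succ_self n)).symm

lemma pcomp_pow {f g : PowerSeries k} (hg : constantCoeff (R := k) g = 0) (e : ℕ) :
    pcomp (f ^ e) g = (pcomp f g) ^ e := by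
  induction e with
  | zero => simpa using pcomp_one
  | succ e ih => rw [pow_succ, pow_succ, pcomp_mul hg, ih]

lemma pcomp_const (f g : PowerSeries k) :
    constantCoeff (R := k) (pcomp f g) = constantCoeff (R := k) f := by
  have := coeff_pcomp f g 0
  simp only [zero_add, Finset.range_one, Finset.sum_singleton, pow_zero, coeff_one,
    coeff_zero_eq_constantCoeff] at *
  simpa using this

lemma pcomp_assoc {f g h : PowerSeries k} (hg : constantCoeff (R := k) g = 0)
    (hh : constantCoeff (R := k) h = 0) :
    pcomp (pcomp f g) h = pcomp f (pcomp g h) := by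
  have hgh : constantCoeff (R := k) (pcomp g h) = 0 := by rw [pcomp_const]; exact hg
  ext n
  rw [coeff_pcomp (pcomp f g) h, coeff_pcomp_of_const_zero f hgh (Nat.lt_succ_self n)]
  have step1 : ∀ d ∈ Finset.range (n+1),
      coeff (R := k) d (pcomp f g) * coeff (R := k) n (h ^ d) =
      ∑ e ∈ Finset.range (n+1), coeff (R := k) e f * (coeff (R := k) d (g ^ e) * coeff (R := k) n (h ^ d)) := by
    intro d hd
    rw [Finset.mem_range] at hd
    rw [coeff_pcomp_of_const_zero f hg (show d < n+1 by omega), Finset.sum_mul]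
    apply Finset.sum_congr rfl
    intro e _
    ring
  rw [Finset.sum_congr rfl step1, Finset.sum_comm]
  apply Finset.sum_congr rfl
  intro e _
  rw [← Finset.mul_sum]
  congr 1
  rw [← pcomp_pow hh, coeff_pcomp_of_const_zero (g ^ e) hh (Nat.lt_succ_self n)]

lemma pcomp_X_right (f : PowerSeries k) : pcomp f X = f := by
  ext n
  rw [coeff_pcomp, Finset.sum_eq_single n]
  · rw [← pow_one (X : PowerSeries k), ← pow_mul, one_mul, coeff_X_pow, if_pos rfl, mul_one]
  · intro d _ hd
    rw [← pow_one (X : PowerSeries k), ← pow_mul, one_mul, coeff_X_pow, if_neg (by omega), mul_zero]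
  · intro h; exact absurd (Finset.mem_range.mpr (Nat.lt_succ_self n)) h

lemma pcomp_X_left {g : PowerSeries k} (hg : constantCoeff (R := k) g = 0) : pcomp X g = g := by
  ext n
  rw [coeff_pcomp, Finset.sum_eq_single 1]
  · rw [coeff_X, if_pos rfl, pow_one, one_mul]
  · intro d _ hd
    rw [coeff_X, if_neg hd, zero_mul]
  · intro h
    rw [Finset.mem_range, not_lt] at h
    have hn0 : n = 0 := by omega
    subst hn0
    have hg0 : coeff (R := k) 0 g = 0 := by rw [coeff_zero_eq_constantCoeff]; exact hg
    rw [pow_one, hg0, mul_zero]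

lemma iter_const {σ : PowerSeries k} (hσ : constantCoeff (R := k) σ = 0) (n : ℕ) :
    constantCoeff (R := k) (pcompIter σ n) = 0 := by
  cases n with
  | zero => exact constantCoeff_X
  | succ n => rw [pcompIter, pcomp_const]; exact hσ

lemma iter_add {σ : PowerSeries k} (hσ : constantCoeff (R := k) σ = 0) (a b : ℕ) :
    pcompIter σ (a + b) = pcomp (pcompIter σ a) (pcompIter σ b) := by
  induction a with
  | zero => rw [Nat.zero_add, pcompIter, pcomp_X_left (iter_const hσ b)]
  | succ a ih =>
    have : a + 1 + b = (a + b) + 1 := by omega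
    rw [this, pcompIter, ih, pcompIter,
      pcomp_assoc (iter_const hσ a) (iter_const hσ b)]

lemma iter_mul {σ : PowerSeries k} (hσ : constantCoeff (R := k) σ = 0) (a b : ℕ) :
    pcompIter σ (a * b) = pcompIter (pcompIter σ a) b := by
  induction b with
  | zero => rw [Nat.mul_zero]; rfl
  | succ b ih =>
    have : a * (b + 1) = a + a * b := by ring
    rw [this, iter_add hσ, ih, pcompIter]

section Frob
variable (p : ℕ) [Fact p.Prime]

lemma coeff_pow_p (u : PowerSeries (ZMod p)) (n : ℕ) :
    coeff (R := ZMod p) n (u ^ p) = if p ∣ n then coeff (R := ZMod p) (n / p) u else 0 := by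
  have hp : 0 < p := (Fact.out : p.Prime).pos
  set T := trunc (n + 1) u with hT
  have hceq : Ceq (n + 1) u (T : PowerSeries (ZMod p)) := by
    intro m hm
    rw [Polynomial.coeff_coe, hT, coeff_trunc, if_pos hm]
  have h1 : coeff (R := ZMod p) n (u ^ p) = coeff (R := ZMod p) n ((T : PowerSeries (ZMod p)) ^ p) :=
    (hceq.pow p) n (Nat.lt_succ_self n)
  rw [h1, ← Polynomial.coe_pow, Polynomial.coeff_coe]
  have h2 : T ^ p = Polynomial.map (frobenius (ZMod p) p) (Polynomial.expand (ZMod p) p T) :=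
    (Polynomial.map_frobenius_expand (p := p) T).symm
  rw [h2, Polynomial.coeff_map, frobenius_def, ZMod.pow_card,
    Polynomial.coeff_expand hp]
  split
  · next h => rw [hT, coeff_trunc, if_pos (Nat.lt_succ_of_le (Nat.div_le_self n p))]
  · rfl

lemma coeff_pow_p_pow (u : PowerSeries (ZMod p)) (r : ℕ) (n : ℕ) :
    coeff (R := ZMod p) n (u ^ p ^ r) =
      if p ^ r ∣ n then coeff (R := ZMod p) (n / p ^ r) u else 0 := by
  induction r generalizing n with
  | zero => simp
  | succ r ih =>
    have hp : 0 < p := (Fact.out : p.Prime).pos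
    rw [pow_succ, pow_mul, coeff_pow_p]
    by_cases hpn : p ∣ n
    · obtain ⟨n', rfl⟩ := hpn
      rw [if_pos ⟨n', rfl⟩, ih, Nat.mul_div_cancel_left n' hp]
      have hiff : p ^ r * p ∣ p * n' ↔ p ^ r ∣ n' := by
        rw [mul_comm (p ^ r) p]
        exact Nat.mul_dvd_mul_iff_left hp
      have hdiv : p * n' / (p ^ r * p) = n' / p ^ r := by
        rw [mul_comm (p ^ r) p]
        exact Nat.mul_div_mul_left n' (p ^ r) hp
      by_cases h2 : p ^ r ∣ n'
      · rw [if_pos h2, if_pos (hiff.mpr h2), hdiv]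
      · rw [if_neg h2, if_neg (fun h => h2 (hiff.mp h))]
    · rw [if_neg hpn, if_neg (fun h => hpn (dvd_trans (dvd_mul_left p (p ^ r)) h))]

end Frob


noncomputable def Hof {k : Type} [CommRing k] (q : ℕ) (f : PowerSeries k) : PowerSeries k :=
  PowerSeries.mk fun j => PowerSeries.coeff (R := k) (1 + q * j) f

lemma coeff_Hof (q : ℕ) (f : PowerSeries k) (j : ℕ) :
    coeff (R := k) j (Hof q f) = coeff (R := k) (1 + q * j) f := coeff_mk j _

lemma InT.const {q : ℕ} {f : PowerSeries k} (hf : InT q f) : constantCoeff (R := k) f = 0 := by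
  rw [← coeff_zero_eq_constantCoeff]; exact hf.1

/-- coefficients of powers of a series `t + (terms of degree ≥ 1 + Q)` -/
lemma coeff_pow_nott {Q : ℕ} {g : PowerSeries k} (h0 : coeff (R := k) 0 g = 0)
    (h1 : coeff (R := k) 1 g = 1) (hdeep : ∀ c, 2 ≤ c → c < 1 + Q → coeff (R := k) c g = 0) :
    ∀ a e, e < a + Q → coeff (R := k) e (g ^ a) = if e = a then 1 else 0 := by
  have h0' : constantCoeff (R := k) g = 0 := by rw [← coeff_zero_eq_constantCoeff]; exact h0
  intro a
  induction a with
  | zero =>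
    intro e _
    rw [pow_zero, coeff_one]
  | succ a ih =>
    intro e he
    rcases Nat.eq_zero_or_pos e with rfl | he0
    · rw [coeff_pow_eq_zero h0' (a+1) 0 (by omega), if_neg (by omega)]
    rw [pow_succ, coeff_mul, Finset.sum_eq_single (e - 1, 1)]
    · rw [h1, ih (e-1) (by omega), mul_one]
      by_cases h : e = a + 1
      · rw [if_pos (by omega), if_pos h]
      · rw [if_neg (by omega), if_neg h]
    · rintro ⟨c, d⟩ hcd hne
      rw [Finset.HasAntidiagonal.mem_antidiagonal] at hcd
      rcases Nat.eq_zero_or_pos d with rfl | hd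
      · rw [h0, mul_zero]
      rcases eq_or_ne d 1 with rfl | hd1
      · have hc : c = e - 1 := by omega
        subst hc
        exact absurd rfl hne
      by_cases hdQ : d < 1 + Q
      · rw [hdeep d (by omega) hdQ, mul_zero]
      · have hc : c < a := by omega
        rw [ih c (by omega), if_neg (by omega), zero_mul]
    · intro h
      exact absurd (Finset.HasAntidiagonal.mem_antidiagonal.mpr (by omega)) h

section Tsec
variable {p : ℕ} [Fact p.Prime] {r q : ℕ} (hq : q = p ^ r) (hr : 1 ≤ r)

lemma q_ge_two (hq : q = p ^ r) (hr : 1 ≤ r) : 2 ≤ q := by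
  have hp : 2 ≤ p := (Fact.out : p.Prime).two_le
  calc 2 ≤ p := hp
    _ = p ^ 1 := (pow_one p).symm
    _ ≤ p ^ r := Nat.pow_le_pow_right (by omega) hr
    _ = q := hq.symm

include hq in
lemma coeff_pow_q (u : PowerSeries (ZMod p)) (n : ℕ) :
    coeff (R := ZMod p) n (u ^ q) = if q ∣ n then coeff (R := ZMod p) (n / q) u else 0 := by
  subst hq; exact coeff_pow_p_pow p u r n

include hq hr in
lemma claimC {g : PowerSeries (ZMod p)} {i : ℕ} (hi : 1 ≤ i) (hgi : InTi q g i)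
    {a m : ℕ} (ha : i ≤ a) (ham : a ≤ m) (hm : m < i + q * i) :
    coeff (R := ZMod p) (1 + q * m) (g ^ (1 + q * a)) = coeff (R := ZMod p) (1 + q * (m - a)) g := by
  have hq2 : 2 ≤ q := q_ge_two hq hr
  have hkey : ∀ e', e' ≤ m → coeff (R := ZMod p) e' (g ^ a) = if e' = a then 1 else 0 := by
    intro e' he'
    exact coeff_pow_nott hgi.1.1 hgi.1.2.1 (fun c h2 hlt => hgi.2 c h2 hlt) a e'
      (by omega)
  have hrw : g ^ (1 + q * a) = g * (g ^ a) ^ q := by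
    rw [pow_add, pow_one, mul_comm q a, pow_mul]
  have hsplit : q * (m - a) + q * a = q * m := by
    rw [← Nat.mul_add]; congr 1; omega
  rw [hrw, coeff_mul, Finset.sum_eq_single (1 + q * (m - a), q * a)]
  · rw [coeff_pow_q hq, if_pos (Dvd.intro a rfl), Nat.mul_div_cancel_left a (by omega),
      hkey a ham, if_pos rfl, mul_one]
  · rintro ⟨c, e⟩ hce hne
    rw [Finset.HasAntidiagonal.mem_antidiagonal] at hce
    rw [coeff_pow_q hq]
    by_cases hdvd : q ∣ e
    · obtain ⟨e', rfl⟩ := hdvd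
      rw [if_pos (Dvd.intro e' rfl), Nat.mul_div_cancel_left e' (by omega)]
      have he'm : e' ≤ m := by
        by_contra hcon
        push_neg at hcon
        have h1 : q * (m + 1) ≤ q * e' := Nat.mul_le_mul_left q hcon
        have h2 : q * (m + 1) = q * m + q := by ring
        omega
      rw [hkey e' he'm]
      have hea : e' ≠ a := by
        rintro rfl
        have hc : c = 1 + q * (m - e') := by omega
        subst hc
        exact hne rfl
      rw [if_neg hea, mul_zero]
    · rw [if_neg hdvd, mul_zero]
  · intro h
    apply absurd _ h
    rw [Finset.HasAntidiagonal.mem_antidiagonal]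
    omega

include hq hr in
lemma claimD {g : PowerSeries (ZMod p)} (hg : InT q g) (a : ℕ) {n : ℕ} (hn : 2 ≤ n)
    (hq' : ¬ q ∣ (n - 1)) :
    coeff (R := ZMod p) n (g ^ (1 + q * a)) = 0 := by
  have hrw : g ^ (1 + q * a) = g * (g ^ a) ^ q := by
    rw [pow_add, pow_one, mul_comm q a, pow_mul]
  rw [hrw, coeff_mul]
  apply Finset.sum_eq_zero
  rintro ⟨c, e⟩ hce
  rw [Finset.HasAntidiagonal.mem_antidiagonal] at hce
  rw [coeff_pow_q hq]
  by_cases hdvd : q ∣ e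
  · rcases Nat.eq_zero_or_pos c with rfl | hc
    · rw [hg.1, zero_mul]
    rcases eq_or_ne c 1 with rfl | hc1
    · exfalso
      apply hq'
      have he : e = n - 1 := by omega
      exact he ▸ hdvd
    · have hcq : ¬ q ∣ (c - 1) := by
        intro hdc
        apply hq'
        have hnn : n - 1 = (c - 1) + e := by omega
        rw [hnn]
        exact Nat.dvd_add hdc hdvd
      rw [hg.2.2 c (by omega) hcq, zero_mul]
  · rw [if_neg hdvd, mul_zero]

include hq hr in
lemma InT.pcomp {f g : PowerSeries (ZMod p)} (hf : InT q f) (hg : InT q g) :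
    InT q (pcomp f g) := by
  refine ⟨?_, ?_, ?_⟩
  · rw [coeff_zero_eq_constantCoeff, pcomp_const, ← coeff_zero_eq_constantCoeff]
    exact hf.1
  · rw [coeff_pcomp, Finset.sum_eq_single 1]
    · rw [pow_one, hf.2.1, hg.2.1, one_mul]
    · intro d hd hne
      rcases Nat.eq_zero_or_pos d with rfl | hd0
      · rw [hf.1, zero_mul]
      · rw [coeff_pow_eq_zero hg.const d 1 (by omega), mul_zero]
    · intro h
      exact absurd (Finset.mem_range.mpr (by omega)) h
  · intro n hn hdvd
    rw [coeff_pcomp]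
    apply Finset.sum_eq_zero
    intro d _
    rcases Nat.eq_zero_or_pos d with rfl | hd0
    · rw [hf.1, zero_mul]
    by_cases hdq : q ∣ (d - 1)
    · obtain ⟨a, ha⟩ := hdq
      have hd1 : d = 1 + q * a := by omega
      rw [hd1, claimD hq hr hg a hn hdvd, mul_zero]
    · rcases eq_or_ne d 1 with rfl | hd1
      · rw [pow_one, hg.2.2 n hn hdvd, mul_zero]
      · rw [hf.2.2 d (by omega) hdq, zero_mul]

include hq hr in
/-- the key multiplicativity: `H_{f∘g} ≡ H_f · H_g` below degree `i + q·i` -/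
lemma mul_lemma {f g : PowerSeries (ZMod p)} {i : ℕ} (hi : 1 ≤ i)
    (hf : InTi q f i) (hg : InTi q g i) {m : ℕ} (hm : m < i + q * i) :
    coeff (R := ZMod p) (1 + q * m) (pcomp f g) =
      coeff (R := ZMod p) m (Hof q f * Hof q g) := by
  have hq2 : 2 ≤ q := q_ge_two hq hr
  have hgc : constantCoeff (R := ZMod p) g = 0 := hg.1.const
  rw [coeff_pcomp_of_const_zero f hgc (Nat.lt_succ_self (1 + q * m))]
  have himg : Finset.image (fun a => 1 + q * a) (Finset.range (m + 1)) ⊆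
      Finset.range (1 + q * m + 1) := by
    intro x hx
    rw [Finset.mem_image] at hx
    obtain ⟨a, ha, rfl⟩ := hx
    rw [Finset.mem_range] at ha ⊢
    have : q * a ≤ q * m := Nat.mul_le_mul_left q (by omega)
    omega
  rw [← Finset.sum_subset himg]
  · rw [Finset.sum_image
      (by intro a _ b _ h
          simp only at h
          exact Nat.eq_of_mul_eq_mul_left (by omega : 0 < q) (by omega : q * a = q * b))]
    rw [coeff_mul, Finset.Nat.sum_antidiagonal_eq_sum_range_succ_mk]
    apply Finset.sum_congr rfl
    intro a ha
    rw [Finset.mem_range] at ha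
    rw [coeff_Hof, coeff_Hof]
    rcases Nat.eq_zero_or_pos a with rfl | ha0
    · simp
    by_cases hia : i ≤ a
    · congr 1
      exact claimC hq hr hi hg hia (by omega) hm
    · have hqa : q ≤ q * a := Nat.le_mul_of_pos_right q ha0
      have hlt : q * a < q * i := by
        have h1 : q * (a + 1) ≤ q * i := Nat.mul_le_mul_left q (by omega)
        have h2 : q * (a + 1) = q * a + q := by ring
        omega
      rw [hf.2 (1 + q * a) (by omega) (by omega), zero_mul, zero_mul]
  · intro x hx hnx
    rcases Nat.eq_zero_or_pos x with rfl | hx0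
    · rw [hf.1.1, zero_mul]
    by_cases hdq : q ∣ (x - 1)
    · obtain ⟨a, hax⟩ := hdq
      have hx1 : x = 1 + q * a := by omega
      have ham : ¬ a ≤ m := by
        intro h
        exact hnx (Finset.mem_image.mpr ⟨a, Finset.mem_range.mpr (by omega), hx1.symm⟩)
      have : 1 + q * m < x := by
        have : q * (m + 1) ≤ q * a := Nat.mul_le_mul_left q (by omega)
        have h2 : q * (m + 1) = q * m + q := by ring
        omega
      rw [coeff_pow_eq_zero hgc x (1 + q * m) this, mul_zero]
    · rcases eq_or_ne x 1 with rfl | hx1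
      · exact absurd (Finset.mem_image.mpr ⟨0, Finset.mem_range.mpr (by omega), by omega⟩) hnx
      · rw [hf.1.2.2 x (by omega) hdq, zero_mul]

end Tsec

section Gen
variable {k : Type} [CommRing k]

lemma mul_deep {A B : PowerSeries k} {i : ℕ}
    (hA : ∀ c, 1 ≤ c → c < i → coeff (R := k) c A = 0)
    (hB : ∀ c, 1 ≤ c → c < i → coeff (R := k) c B = 0) :
    ∀ c, 1 ≤ c → c < i → coeff (R := k) c (A * B) = 0 := by
  intro c hc1 hci
  rw [coeff_mul]
  apply Finset.sum_eq_zero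
  rintro ⟨u, v⟩ huv
  rw [Finset.HasAntidiagonal.mem_antidiagonal] at huv
  rcases Nat.eq_zero_or_pos v with rfl | hv
  · rw [hA u (by omega) (by omega), zero_mul]
  · rw [hB v (by omega) (by omega), mul_zero]

lemma pow_one_plus {K : PowerSeries k} {j : ℕ} (hj : 1 ≤ j) (h0 : coeff (R := k) 0 K = 1)
    (hz : ∀ c, 1 ≤ c → c < j → coeff (R := k) c K = 0) (m : ℕ) :
    coeff (R := k) 0 (K ^ m) = 1 ∧ (∀ c, 1 ≤ c → c < j → coeff (R := k) c (K ^ m) = 0) ∧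
      coeff (R := k) j (K ^ m) = (m : k) * coeff (R := k) j K := by
  induction m with
  | zero =>
    refine ⟨by simp, fun c hc1 _ => by simp [coeff_one]; omega, ?_⟩
    rw [pow_zero, coeff_one, if_neg (by omega), Nat.cast_zero, zero_mul]
  | succ m ih =>
    obtain ⟨ih0, ihz, ihj⟩ := ih
    refine ⟨?_, ?_, ?_⟩
    · rw [pow_succ, coeff_mul, Finset.Nat.sum_antidiagonal_eq_sum_range_succ_mk]
      simp [ih0, h0]
    · intro c hc1 hcj
      rw [pow_succ]
      exact mul_deep ihz hz c hc1 hcj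
    · rw [pow_succ, coeff_mul, Finset.Nat.sum_antidiagonal_eq_sum_range_succ_mk,
        Finset.sum_range_succ, Finset.sum_eq_single 0]
      · rw [ih0, Nat.sub_zero, ihj, Nat.sub_self, h0, mul_one, one_mul]
        push_cast
        ring
      · intro u hu hu0
        rw [Finset.mem_range] at hu
        rw [ihz u (by omega) hu, zero_mul]
      · intro h
        exact absurd (Finset.mem_range.mpr (by omega)) h

end Gen


section Main
variable {p : ℕ} [Fact p.Prime] {r q : ℕ} (hq : q = p ^ r) (hr : 1 ≤ r)

include hq hr in
lemma InTi.pcomp' {f g : PowerSeries (ZMod p)} {i : ℕ} (hi : 1 ≤ i)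
    (hf : InTi q f i) (hg : InTi q g i) : InTi q (pcomp f g) i := by
  have hq2 : 2 ≤ q := q_ge_two hq hr
  refine ⟨InT.pcomp hq hr hf.1 hg.1, ?_⟩
  intro m h2 hlt
  by_cases hdq : q ∣ (m - 1)
  · obtain ⟨c, hc⟩ := hdq
    have hc1 : 1 ≤ c := by
      rcases Nat.eq_zero_or_pos c with rfl | h; · omega
      · omega
    have hci : c < i := by
      by_contra hcon
      push_neg at hcon
      have : q * i ≤ q * c := Nat.mul_le_mul_left q hcon
      omega
    have hm : m = 1 + q * c := by omega
    rw [hm, mul_lemma hq hr hi hf hg (by omega)]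
    have key : ∀ (u : PowerSeries (ZMod p)), InTi q u i → ∀ c', 1 ≤ c' → c' < i →
        coeff (R := ZMod p) c' (Hof q u) = 0 := by
      intro u hu c' h1 h2
      rw [coeff_Hof]
      have h4 : q ≤ q * c' := Nat.le_mul_of_pos_right q h1
      have h5 : q * (c' + 1) ≤ q * i := Nat.mul_le_mul_left q (by omega)
      have h6 : q * (c' + 1) = q * c' + q := by ring
      exact hu.2 _ (by omega) (by omega)
    exact mul_deep (key f hf) (key g hg) c hc1 hci
  · exact (InT.pcomp hq hr hf.1 hg.1).2.2 m h2 hdq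

lemma InTi_X {i : ℕ} (hq2 : 2 ≤ q) : InTi (k := ZMod p) q X i := by
  refine ⟨⟨?_, ?_, ?_⟩, ?_⟩
  · rw [coeff_X, if_neg (by omega)]
  · rw [coeff_X, if_pos rfl]
  · intro m hm _; rw [coeff_X, if_neg (by omega)]
  · intro m hm _; rw [coeff_X, if_neg (by omega)]

include hq hr in
lemma main_induction {σ : PowerSeries (ZMod p)} {i : ℕ} (hi : 1 ≤ i)
    (hσ : InTi q σ i) (n : ℕ) :
    InTi q (pcompIter σ n) i ∧
      ∀ m, m < i + q * i →
        coeff (R := ZMod p) m (Hof q (pcompIter σ n)) = coeff (R := ZMod p) m ((Hof q σ) ^ n) := by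
  have hq2 : 2 ≤ q := q_ge_two hq hr
  induction n with
  | zero =>
    refine ⟨InTi_X hq2, fun m _ => ?_⟩
    show coeff (R := ZMod p) m (Hof q X) = coeff (R := ZMod p) m ((Hof q σ) ^ 0)
    rw [coeff_Hof, pow_zero, coeff_one, coeff_X]
    rcases Nat.eq_zero_or_pos m with rfl | hm
    · simp
    · have hqm : q * m ≠ 0 := Nat.mul_ne_zero (by omega) (by omega)
      rw [if_neg (by omega), if_neg (by omega)]
  | succ n ih =>
    obtain ⟨ih1, ih2⟩ := ih
    refine ⟨InTi.pcomp' hq hr hi hσ ih1, fun m hm => ?_⟩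
    show coeff (R := ZMod p) m (Hof q (pcomp σ (pcompIter σ n))) = _
    rw [coeff_Hof, mul_lemma hq hr hi hσ ih1 hm, pow_succ, mul_comm ((Hof q σ) ^ n) (Hof q σ)]
    exact Ceq.mul (fun m' _ => rfl) ih2 m hm

include hq hr in
lemma part1 {σ : PowerSeries (ZMod p)} {i : ℕ} (hi : 1 ≤ i)
    (hσ : InTi q σ i) (ha : coeff (R := ZMod p) (1 + q * i) σ ≠ 0) :
    InTi q (pcompIter σ p) (p * i) ∧
      coeff (R := ZMod p) (1 + q * (p * i)) (pcompIter σ p) ≠ 0 := by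
  have hq2 : 2 ≤ q := q_ge_two hq hr
  have hp2 : 2 ≤ p := (Fact.out : p.Prime).two_le
  have hpq : p ≤ q := by
    rw [hq]
    calc p = p ^ 1 := (pow_one p).symm
      _ ≤ p ^ r := Nat.pow_le_pow_right (by omega) hr
  have hpi : p * i < i + q * i := by
    have : p * i ≤ q * i := Nat.mul_le_mul_right i hpq
    omega
  obtain ⟨hIT, hH⟩ := main_induction hq hr hi hσ p
  constructor
  · refine ⟨hIT.1, ?_⟩
    intro m h2 hlt
    by_cases hdq : q ∣ (m - 1)
    · obtain ⟨c, hc⟩ := hdq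
      have hc1 : 1 ≤ c := by
        rcases Nat.eq_zero_or_pos c with rfl | h; · omega
        · omega
      have hci : c < p * i := by
        by_contra hcon
        push_neg at hcon
        have : q * (p * i) ≤ q * c := Nat.mul_le_mul_left q hcon
        omega
      have hm : m = 1 + q * c := by omega
      have hcH := hH c (by omega)
      rw [coeff_Hof] at hcH
      rw [hm, hcH, coeff_pow_p]
      by_cases hpc : p ∣ c
      · obtain ⟨c', rfl⟩ := hpc
        rw [if_pos ⟨c', rfl⟩, Nat.mul_div_cancel_left c' (by omega), coeff_Hof]
        have hc'1 : 1 ≤ c' := by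
          rcases Nat.eq_zero_or_pos c' with rfl | h; · omega
          · omega
        have hc'i : c' < i := by
          by_contra hcon
          push_neg at hcon
          have : p * i ≤ p * c' := Nat.mul_le_mul_left p hcon
          omega
        have h4 : q ≤ q * c' := Nat.le_mul_of_pos_right q hc'1
        have h5 : q * (c' + 1) ≤ q * i := Nat.mul_le_mul_left q (by omega)
        have h6 : q * (c' + 1) = q * c' + q := by ring
        exact hσ.2 _ (by omega) (by omega)
      · rw [if_neg hpc]
    · exact hIT.1.2.2 m h2 hdq
  · have := hH (p * i) hpi
    rw [coeff_Hof] at this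
    rw [this, coeff_pow_p, if_pos ⟨i, rfl⟩, Nat.mul_div_cancel_left i (by omega), coeff_Hof]
    exact ha

end Main

section Part2
variable {p : ℕ} [Fact p.Prime] {r q : ℕ} (hq : q = p ^ r) (hr : 1 ≤ r)

include hq hr in
lemma part2 {σ : PowerSeries (ZMod p)} (hσ : InT q σ) (hne : σ ≠ X) :
    ∀ n, 1 ≤ n → pcompIter σ n ≠ X := by
  classical
  have hq2 : 2 ≤ q := q_ge_two hq hr
  have hp1 : 0 < p := (Fact.out : p.Prime).pos
  have hex : ∃ j, 1 ≤ j ∧ coeff (R := ZMod p) (1 + q * j) σ ≠ 0 := by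
    by_contra hall
    push_neg at hall
    apply hne
    ext mm
    rcases Nat.lt_or_ge mm 2 with h2 | h2
    · interval_cases mm
      · rw [hσ.1, coeff_X, if_neg (by omega)]
      · rw [hσ.2.1, coeff_X, if_pos rfl]
    · rw [coeff_X, if_neg (by omega)]
      by_cases hdq : q ∣ (mm - 1)
      · obtain ⟨j, hj⟩ := hdq
        have hj1 : 1 ≤ j := by
          rcases Nat.eq_zero_or_pos j with rfl | h; · omega
          · omega
        have : mm = 1 + q * j := by omega
        rw [this]
        exact hall j hj1
      · exact hσ.2.2 mm h2 hdq
  set i := Nat.find hex with hidef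
  obtain ⟨hi1, hai⟩ := Nat.find_spec hex
  have hσi : InTi q σ i := by
    refine ⟨hσ, fun m h2 hlt => ?_⟩
    by_cases hdq : q ∣ (m - 1)
    · obtain ⟨c, hc⟩ := hdq
      have hc1 : 1 ≤ c := by
        rcases Nat.eq_zero_or_pos c with rfl | h; · omega
        · omega
      have hci : c < i := by
        by_contra hcon
        push_neg at hcon
        have : q * i ≤ q * c := Nat.mul_le_mul_left q hcon
        omega
      have hm : m = 1 + q * c := by omega
      by_contra hcc
      exact (Nat.find_min hex hci) ⟨hc1, by rw [← hm]; exact hcc⟩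
    · exact hσ.2.2 m h2 hdq
  intro n hn
  set e := n.factorization p with hedef
  set m := n / p ^ e with hmdef
  have hfac : p ^ e * m = n := Nat.ordProj_mul_ordCompl_eq_self n p
  have hpm : ¬ p ∣ m := Nat.not_dvd_ordCompl (Fact.out : p.Prime) (by omega)
  have iterclaim : ∀ e', InTi q (pcompIter σ (p ^ e')) (p ^ e' * i) ∧
      coeff (R := ZMod p) (1 + q * (p ^ e' * i)) (pcompIter σ (p ^ e')) ≠ 0 := by
    intro e'
    induction e' with
    | zero =>
      have h1 : pcompIter σ 1 = σ := pcomp_X_right σ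
      rw [pow_zero, one_mul, h1]
      exact ⟨hσi, hai⟩
    | succ e' ih =>
      have hmul : p ^ (e' + 1) = p ^ e' * p := pow_succ p e'
      rw [hmul, iter_mul hσ.const]
      have hpos : 1 ≤ p ^ e' * i := Nat.mul_pos (pow_pos hp1 e') (by omega)
      have hres := part1 hq hr hpos ih.1 ih.2
      have harr : p * (p ^ e' * i) = p ^ e' * p * i := by ring
      rw [harr] at hres
      exact hres
  obtain ⟨hτ, ha⟩ := iterclaim e
  set τ := pcompIter σ (p ^ e) with hτdef
  set j := p ^ e * i with hjdef
  have hj1 : 1 ≤ j := Nat.mul_pos (pow_pos hp1 e) (by omega)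
  have hiter : pcompIter σ n = pcompIter τ m := by
    rw [← hfac, iter_mul hσ.const]
  have hqj : 1 ≤ q * j := Nat.mul_pos (by omega) hj1
  have hmain := (main_induction hq hr hj1 hτ m).2 j (by omega)
  rw [coeff_Hof] at hmain
  have hK0 : coeff (R := ZMod p) 0 (Hof q τ) = 1 := by
    have h1 : 1 + q * 0 = 1 := by ring
    rw [coeff_Hof, h1]
    exact hτ.1.2.1
  have hKz : ∀ c, 1 ≤ c → c < j → coeff (R := ZMod p) c (Hof q τ) = 0 := by
    intro c h1 h2
    rw [coeff_Hof]
    have h4 : q ≤ q * c := Nat.le_mul_of_pos_right q h1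
    have h5 : q * (c + 1) ≤ q * j := Nat.mul_le_mul_left q (by omega)
    have h6 : q * (c + 1) = q * c + q := by ring
    exact hτ.2 _ (by omega) (by omega)
  have hKj := (pow_one_plus hj1 hK0 hKz m).2.2
  have hmne : (m : ZMod p) ≠ 0 := by
    rw [Ne, ZMod.natCast_eq_zero_iff]
    exact hpm
  have hcoeff : coeff (R := ZMod p) (1 + q * j) (pcompIter σ n) ≠ 0 := by
    rw [hiter, hmain, hKj, coeff_Hof]
    exact mul_ne_zero hmne ha
  intro hX
  rw [hX, coeff_X, if_neg (by omega)] at hcoeff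
  exact hcoeff rfl

end Part2

theorem stmt13 (p : ℕ) [Fact p.Prime] (r : ℕ) (hr : 1 ≤ r) (q : ℕ) (hq : q = p ^ r) :
    (∀ (i : ℕ), 1 ≤ i → ∀ σ : PowerSeries (ZMod p), InTi q σ i →
      PowerSeries.coeff (R := ZMod p) (1 + q * i) σ ≠ 0 →
      InTi q (pcompIter σ p) (p * i) ∧
        PowerSeries.coeff (R := ZMod p) (1 + q * (p * i)) (pcompIter σ p) ≠ 0) ∧
    (∀ σ : PowerSeries (ZMod p), InT q σ → σ ≠ PowerSeries.X →
      ∀ n, 1 ≤ n → pcompIter σ n ≠ PowerSeries.X) := by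
  constructor
  · intro i hi σ hσ ha
    exact part1 hq hr hi hσ ha
  · intro σ hσ hne n hn
    exact part2 hq hr hσ hne n hn
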